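/- For all natural numbers n, m, k: S_q[n+m, k] = Σ_{r=0}^{n} Σ_{j=0}^{m} S_q[m,j] · q^{j(k−j)} · binom(r, k−j)_{1/q} · S_q[n,r] · Π_{i=0}^{r−k+j−1} [j−i]_q, where the product is [j]_q [j−1]_q ⋯ [k−r+1]_q (empty, hence 1, when r − k + j ≤ 0), binom(r, k−j) is interpreted as 0 when j > k, and the exponent k − j is computed in ℤ. -/

import Mathlib

/-- The `q`-bracket `[t]_q = (q^t - 1)/(q - 1)` (real exponentiation). -/
noncomputable def qBracket (q t : ℝ) : ℝ := (q ^ t - 1) / (q - 1)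

open Classical in
/-- The `Q`-binomial coefficient: the sum of `Q^(t₁+⋯+t_{n-k})` over all weakly
increasing integer tuples `0 ≤ t₁ ≤ ⋯ ≤ t_{n-k} ≤ k` when `k ≤ n`, and `0` when `k > n`. -/
noncomputable def qBinom (Q : ℝ) (n k : ℕ) : ℝ :=
  if k ≤ n then
    ∑ f ∈ Finset.univ.filter (fun f : Fin (n - k) → Fin (k + 1) => Monotone f),
      Q ^ (∑ i, (f i : ℕ))
  else 0

/-- The `q`-Stirling numbers of the second kind `S_q[n,k]`. -/
noncomputable def qStirling (q : ℝ) : ℕ → ℕ → ℝ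
  | 0, 0 => 1
  | 0, _ + 1 => 0
  | _ + 1, 0 => 0
  | n + 1, k + 1 =>
    if k + 1 ≤ n + 1 then
      q ^ k * qStirling q n k + qBracket q ((k : ℝ) + 1) * qStirling q n (k + 1)
    else 0

/-!
Fix `n` and put `c(r, j, k) = q^{j(k-j)} binom(r, k-j)_{1/q} [j]_q [j-1]_q ⋯ [k-r+1]_q`.
As functions of `(m, k)`, both sides obey the recursion of `S_q[m, k]` in `m`: the left side
trivially, the right side because `c` obeys the transposed recursion
`q^j c(r, j+1, k+1) + [j]_q c(r, j, k+1) = q^k c(r, j, k) + [k+1]_q c(r, j, k+1)`;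
at `m = 0` both are `S_q[n, k]`, as `c(r, 0, k) = δ_{rk}`. The transposed recursion comes down to
the absorption identity `[s+1]_Q binom(s+t+1, s+1)_Q = [t+1]_Q binom(s+t+1, s)_Q` at `Q = 1/q`,
which follows from `binom(a+b, a)_Q [a]_Q! [b]_Q! = [a+b]_Q!` and hence from the Pascal rule;
the latter splits the weakly increasing tuples according to whether they reach the top value.
-/

open Finset

lemma Monotone.snoc_of_le {α : Type*} [Preorder α] {e : ℕ} {g : Fin e → α} (hg : Monotone g)
    {a : α} (ha : ∀ i, g i ≤ a) : Monotone (Fin.snoc g a : Fin (e + 1) → α) := by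
  intro x y hxy
  induction y using Fin.lastCases with
  | last => induction x using Fin.lastCases <;> simp [ha]
  | cast y =>
    induction x using Fin.lastCases with
    | last => exact absurd hxy (not_le.mpr (Fin.castSucc_lt_last y))
    | cast x => simpa using hg hxy

open Classical in
noncomputable def monotoneWeight (Q : ℝ) (e k : ℕ) : ℝ :=
  ∑ f ∈ univ.filter (fun f : Fin e → Fin (k + 1) => Monotone f), Q ^ (∑ i, (f i : ℕ))

lemma monotoneWeight_zero_left (Q : ℝ) (k : ℕ) : monotoneWeight Q 0 k = 1 := by
  rw [monotoneWeight, filter_true_of_mem fun f _ a => a.elim0, Fintype.sum_unique]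
  simp

lemma monotoneWeight_zero_right (Q : ℝ) (e : ℕ) : monotoneWeight Q e 0 = 1 := by
  have : Unique (Fin (0 + 1)) := inferInstanceAs (Unique (Fin 1))
  rw [monotoneWeight, filter_true_of_mem fun f _ => Subsingleton.monotone' f, Fintype.sum_unique]
  simp

open Classical in
lemma sum_monotone_of_last_eq_last (Q : ℝ) (e k : ℕ) :
    ∑ f ∈ univ.filter (fun f : Fin (e + 1) → Fin (k + 1 + 1) =>
        Monotone f ∧ f (Fin.last e) = Fin.last (k + 1)), Q ^ (∑ i, (f i : ℕ))
      = Q ^ (k + 1) * monotoneWeight Q e (k + 1) := by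
  rw [monotoneWeight, mul_sum]
  refine sum_nbij' Fin.init (fun g => Fin.snoc g (Fin.last (k + 1))) ?_ ?_ ?_ ?_ ?_
  · simp only [mem_filter, mem_univ, true_and]
    exact fun f hf => hf.1.comp Fin.strictMono_castSucc.monotone
  · simp only [mem_filter, mem_univ, true_and]
    exact fun g hg => ⟨hg.snoc_of_le fun _ => Fin.le_last _, Fin.snoc_last _ _⟩
  · simp only [mem_filter, mem_univ, true_and]
    rintro f ⟨-, hf⟩
    rw [← hf, Fin.snoc_init_self]
  · intro g _
    exact Fin.init_snoc _ _
  · simp only [mem_filter, mem_univ, true_and]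
    rintro f ⟨-, hf⟩
    rw [Fin.sum_univ_castSucc, hf, pow_add, mul_comm]
    rfl

open Classical in
lemma sum_monotone_of_last_ne_last (Q : ℝ) (e k : ℕ) :
    ∑ f ∈ univ.filter (fun f : Fin (e + 1) → Fin (k + 1 + 1) =>
        Monotone f ∧ f (Fin.last e) ≠ Fin.last (k + 1)), Q ^ (∑ i, (f i : ℕ))
      = monotoneWeight Q (e + 1) k := by
  have hne : ∀ f ∈ univ.filter (fun f : Fin (e + 1) → Fin (k + 1 + 1) =>
      Monotone f ∧ f (Fin.last e) ≠ Fin.last (k + 1)), ∀ x, f x ≠ Fin.last (k + 1) := by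
    simp only [mem_filter, mem_univ, true_and]
    exact fun f hf x =>
      ((hf.1 (Fin.le_last x)).trans_lt (Fin.lt_last_iff_ne_last.mpr hf.2)).ne
  rw [monotoneWeight]
  refine sum_bij' (fun f hf x => (f x).castPred (hne f hf x)) (fun g _ x => (g x).castSucc)
    ?_ ?_ ?_ ?_ ?_
  · simp only [mem_filter, mem_univ, true_and]
    exact fun f hf x y hxy => Fin.castPred_le_castPred_iff.mpr (hf.1 hxy)
  · simp only [mem_filter, mem_univ, true_and]
    exact fun g hg =>
      ⟨fun x y hxy => Fin.castSucc_le_castSucc_iff.mpr (hg hxy), Fin.castSucc_ne_last _⟩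
  · intro f _
    simp
  · intro g _
    simp
  · intro f _
    simp

lemma monotoneWeight_succ_succ (Q : ℝ) (e k : ℕ) :
    monotoneWeight Q (e + 1) (k + 1)
      = monotoneWeight Q (e + 1) k + Q ^ (k + 1) * monotoneWeight Q e (k + 1) := by
  rw [monotoneWeight,
    ← sum_filter_not_add_sum_filter _ (fun f => f (Fin.last e) = Fin.last (k + 1)),
    filter_filter, filter_filter, sum_monotone_of_last_ne_last, sum_monotone_of_last_eq_last]

lemma qBinom_of_le (Q : ℝ) {n k : ℕ} (h : k ≤ n) :
    qBinom Q n k = monotoneWeight Q (n - k) k :=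
  if_pos h

lemma qBinom_of_lt (Q : ℝ) {n k : ℕ} (h : n < k) : qBinom Q n k = 0 :=
  if_neg (Nat.not_le.mpr h)

lemma qBinom_self (Q : ℝ) (n : ℕ) : qBinom Q n n = 1 := by
  rw [qBinom_of_le Q le_rfl, Nat.sub_self, monotoneWeight_zero_left]

lemma qBinom_zero_right (Q : ℝ) (n : ℕ) : qBinom Q n 0 = 1 := by
  rw [qBinom_of_le Q n.zero_le, monotoneWeight_zero_right]

lemma qBinom_succ_succ (Q : ℝ) (n k : ℕ) :
    qBinom Q (n + 1) (k + 1) = qBinom Q n k + Q ^ (k + 1) * qBinom Q n (k + 1) := by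
  rcases lt_trichotomy n k with h | rfl | h
  · rw [qBinom_of_lt Q (Nat.succ_lt_succ h), qBinom_of_lt Q h,
      qBinom_of_lt Q (h.trans k.lt_succ_self)]
    ring
  · simp [qBinom_self, qBinom_of_lt]
  · obtain ⟨e, rfl⟩ := Nat.exists_eq_add_of_lt h
    rw [qBinom_of_le Q (by omega), qBinom_of_le Q (by omega), qBinom_of_le Q (by omega),
      show k + e + 1 + 1 - (k + 1) = e + 1 by omega, show k + e + 1 - k = e + 1 by omega,
      show k + e + 1 - (k + 1) = e by omega, monotoneWeight_succ_succ]

noncomputable def qNat (Q : ℝ) (n : ℕ) : ℝ := ∑ i ∈ range n, Q ^ i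

noncomputable def qFactorial (Q : ℝ) (n : ℕ) : ℝ := ∏ i ∈ range n, qNat Q (i + 1)

lemma qNat_add (Q : ℝ) (a b : ℕ) : qNat Q (a + b) = qNat Q a + Q ^ a * qNat Q b := by
  simp only [qNat, sum_range_add, pow_add, mul_sum]

lemma qFactorial_succ (Q : ℝ) (n : ℕ) :
    qFactorial Q (n + 1) = qFactorial Q n * qNat Q (n + 1) :=
  prod_range_succ _ _

lemma qFactorial_pos {Q : ℝ} (hQ : 0 < Q) (n : ℕ) : 0 < qFactorial Q n :=
  prod_pos fun _ _ => sum_pos (fun j _ => pow_pos hQ j) nonempty_range_add_one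

theorem qBinom_add_mul_qFactorial (Q : ℝ) :
    ∀ a b : ℕ, qBinom Q (a + b) a * qFactorial Q a * qFactorial Q b = qFactorial Q (a + b)
  | 0, b => by simp [qBinom_zero_right, qFactorial]
  | a + 1, 0 => by simp [qBinom_self, qFactorial]
  | a + 1, b + 1 => by
    have h₁ := qBinom_add_mul_qFactorial Q a (b + 1)
    have h₂ := qBinom_add_mul_qFactorial Q (a + 1) b
    have h₃ : qNat Q (a + b + 1 + 1) = qNat Q (a + 1) + Q ^ (a + 1) * qNat Q (b + 1) := by
      rw [← qNat_add]; ring_nf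
    rw [show a + (b + 1) = a + b + 1 by omega, qFactorial_succ Q b] at h₁
    rw [show a + 1 + b = a + b + 1 by omega, qFactorial_succ Q a] at h₂
    rw [show a + 1 + (b + 1) = a + b + 1 + 1 by omega, qBinom_succ_succ, qFactorial_succ Q a,
      qFactorial_succ Q b, qFactorial_succ Q (a + b + 1)]
    linear_combination qNat Q (a + 1) * h₁ + Q ^ (a + 1) * qNat Q (b + 1) * h₂
      - qFactorial Q (a + b + 1) * h₃

theorem qNat_mul_qBinom_succ {Q : ℝ} (hQ : 0 < Q) (s t : ℕ) :
    qNat Q (s + 1) * qBinom Q (s + t + 1) (s + 1) = qNat Q (t + 1) * qBinom Q (s + t + 1) s := by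
  have h₁ := qBinom_add_mul_qFactorial Q (s + 1) t
  have h₂ := qBinom_add_mul_qFactorial Q s (t + 1)
  rw [show s + 1 + t = s + t + 1 by omega, qFactorial_succ] at h₁
  rw [← add_assoc, qFactorial_succ] at h₂
  have hst := mul_pos (qFactorial_pos hQ s) (qFactorial_pos hQ t)
  refine mul_right_cancel₀ hst.ne' ?_
  linear_combination h₁ - h₂

lemma qBracket_zero (q : ℝ) : qBracket q 0 = 0 := by
  simp [qBracket]

lemma qBracket_natCast {q : ℝ} (hq1 : q ≠ 1) (n : ℕ) : qBracket q n = qNat q n := by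
  rw [qBracket, Real.rpow_natCast, qNat, geom_sum_eq hq1]

lemma pow_mul_qBracket_sub {q : ℝ} (hq : 0 < q) (j t : ℕ) :
    q ^ t * qBracket q ((j : ℝ) - t) = qBracket q j - qBracket q t := by
  simp only [qBracket, Real.rpow_sub hq, Real.rpow_natCast, ← sub_div, ← mul_div_assoc]
  congr 1
  field_simp
  ring

lemma pow_mul_qNat_inv {q : ℝ} (hq : q ≠ 0) (n : ℕ) :
    q ^ n * qNat q⁻¹ (n + 1) = qNat q (n + 1) := by
  rw [qNat, qNat, mul_sum, ← sum_range_reflect]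
  refine sum_congr rfl fun i hi => ?_
  rw [mem_range] at hi
  rw [show n + 1 - 1 - i = n - i by omega, inv_pow, ← pow_sub_mul_pow q (Nat.le_of_lt_succ hi)]
  field_simp

lemma pow_mul_qNat_mul_qBinom_inv {q : ℝ} (hq : 0 < q) (s t : ℕ) :
    q ^ t * qNat q (s + 1) * qBinom (1 / q) (s + t + 1) (s + 1)
      = q ^ s * qNat q (t + 1) * qBinom (1 / q) (s + t + 1) s := by
  have h := qNat_mul_qBinom_succ (inv_pos.mpr hq) s t
  rw [← pow_mul_qNat_inv hq.ne' s, ← pow_mul_qNat_inv hq.ne' t, one_div]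
  linear_combination q ^ s * q ^ t * h

section qStirling

variable (q : ℝ)

lemma qStirling_zero_zero : qStirling q 0 0 = 1 := rfl

lemma qStirling_succ_zero (n : ℕ) : qStirling q (n + 1) 0 = 0 := rfl

lemma qStirling_eq_zero_of_lt : ∀ {n k : ℕ}, n < k → qStirling q n k = 0
  | 0, _ + 1, _ => rfl
  | n + 1, k + 1, h => if_neg (by omega)

lemma qStirling_succ_succ (n k : ℕ) :
    qStirling q (n + 1) (k + 1)
      = q ^ k * qStirling q n k + qBracket q (k + 1) * qStirling q n (k + 1) := by
  by_cases h : k ≤ n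
  · exact if_pos (by omega)
  · rw [qStirling_eq_zero_of_lt q (by omega : n + 1 < k + 1),
      qStirling_eq_zero_of_lt q (by omega : n < k),
      qStirling_eq_zero_of_lt q (by omega : n < k + 1)]
    ring

lemma sum_qStirling_succ_mul (m : ℕ) (w : ℕ → ℝ) :
    ∑ j ∈ range (m + 2), qStirling q (m + 1) j * w j
      = ∑ j ∈ range (m + 1), qStirling q m j * (q ^ j * w (j + 1) + qBracket q j * w j) := by
  set f : ℕ → ℝ := fun j => qBracket q j * qStirling q m j * w j
  have hshift : ∑ j ∈ range (m + 1), f (j + 1) = ∑ j ∈ range (m + 1), f j := by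
    have hf₀ : f 0 = 0 := by simp [f, qBracket_zero]
    have hf_top : f (m + 1) = 0 := by simp [f, qStirling_eq_zero_of_lt q m.lt_succ_self]
    linarith [sum_range_succ' f (m + 1), sum_range_succ f (m + 1)]
  simp only [f, Nat.cast_succ] at hshift
  rw [sum_range_succ', qStirling_succ_zero, zero_mul, add_zero]
  simp only [qStirling_succ_succ, add_mul, sum_add_distrib, hshift, mul_add]
  congr 1 <;> exact sum_congr rfl fun _ _ => by ring

theorem qStirling_add_eq_sum (n : ℕ) (v : ℕ → ℕ → ℝ)
    (hv₀ : ∀ k, v 0 k = qStirling q n k) (hv_zero : ∀ j, v (j + 1) 0 = 0)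
    (hv : ∀ j k, q ^ j * v (j + 1) (k + 1) + qBracket q j * v j (k + 1)
      = q ^ k * v j k + qBracket q (k + 1) * v j (k + 1)) :
    ∀ m k, qStirling q (n + m) k = ∑ j ∈ range (m + 1), qStirling q m j * v j k
  | 0, k => by simp [hv₀, qStirling_zero_zero]
  | m + 1, 0 => by simp [sum_range_succ', qStirling_succ_zero, hv_zero, ← add_assoc]
  | m + 1, k + 1 => by
    rw [sum_qStirling_succ_mul, ← add_assoc, qStirling_succ_succ,
      qStirling_add_eq_sum n v hv₀ hv_zero hv m, qStirling_add_eq_sum n v hv₀ hv_zero hv m,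
      mul_sum, mul_sum, ← sum_add_distrib]
    refine sum_congr rfl fun j _ => ?_
    linear_combination qStirling q m j * (hv j k).symm

end qStirling

noncomputable def qDescFactorial (q : ℝ) (j t : ℕ) : ℝ :=
  ∏ i ∈ range t, qBracket q ((j : ℝ) - (i : ℝ))

section qDescFactorial

variable (q : ℝ)

lemma qDescFactorial_zero_right (j : ℕ) : qDescFactorial q j 0 = 1 := prod_range_zero _

lemma qDescFactorial_succ (j t : ℕ) :
    qDescFactorial q j (t + 1) = qDescFactorial q j t * qBracket q ((j : ℝ) - t) :=
  prod_range_succ _ _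

lemma qDescFactorial_succ_succ (j t : ℕ) :
    qDescFactorial q (j + 1) (t + 1) = qBracket q (j + 1 : ℕ) * qDescFactorial q j t := by
  rw [qDescFactorial, prod_range_succ', mul_comm]
  push_cast
  simp only [sub_zero, add_sub_add_right_eq_sub, qDescFactorial]

lemma qDescFactorial_eq_zero_of_lt {j t : ℕ} (h : j < t) : qDescFactorial q j t = 0 :=
  prod_eq_zero (mem_range.mpr h) (by rw [sub_self, qBracket_zero])

end qDescFactorial

noncomputable def qStirlingConvCoeff (q : ℝ) (r j k : ℕ) : ℝ :=
  q ^ ((j : ℝ) * ((k : ℝ) - (j : ℝ))) * (if j ≤ k then qBinom (1 / q) r (k - j) else 0) *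
    qDescFactorial q j (r + j - k)

section qStirlingConvCoeff

variable (q : ℝ)

lemma qStirlingConvCoeff_of_lt {r j k : ℕ} (h : k < j) : qStirlingConvCoeff q r j k = 0 := by
  simp [qStirlingConvCoeff, Nat.not_le.mpr h]

lemma qStirlingConvCoeff_add (r j s : ℕ) :
    qStirlingConvCoeff q r j (j + s)
      = q ^ (j * s) * qBinom (1 / q) r s * qDescFactorial q j (r - s) := by
  rw [qStirlingConvCoeff, if_pos (Nat.le_add_right j s), Nat.add_sub_cancel_left,
    show r + j - (j + s) = r - s by omega, ← Real.rpow_natCast]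
  push_cast
  ring_nf

lemma qStirlingConvCoeff_zero_left (r k : ℕ) :
    qStirlingConvCoeff q r 0 k = if r = k then 1 else 0 := by
  rw [← zero_add k, qStirlingConvCoeff_add]
  rcases lt_trichotomy r k with h | rfl | h
  · simp [qBinom_of_lt _ h, h.ne]
  · simp [qBinom_self, qDescFactorial_zero_right]
  · simp [qDescFactorial_eq_zero_of_lt q (Nat.sub_pos_of_lt h), h.ne']

theorem qStirlingConvCoeff_rec {q : ℝ} (hq : 0 < q) (hq1 : q ≠ 1) (r j k : ℕ) :
    q ^ j * qStirlingConvCoeff q r (j + 1) (k + 1)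
        + qBracket q j * qStirlingConvCoeff q r j (k + 1)
      = q ^ k * qStirlingConvCoeff q r j k
        + qBracket q (k + 1) * qStirlingConvCoeff q r j (k + 1) := by
  rcases lt_or_ge k j with hkj | hjk
  · rw [qStirlingConvCoeff_of_lt q (by omega : k + 1 < j + 1), qStirlingConvCoeff_of_lt q hkj]
    rcases (Nat.succ_le_of_lt hkj).eq_or_lt with rfl | hlt
    · push_cast; ring
    · rw [qStirlingConvCoeff_of_lt q hlt]; ring
  obtain ⟨s, rfl⟩ := Nat.exists_eq_add_of_le hjk
  rw [show j + s + 1 = (j + 1) + s by ring, qStirlingConvCoeff_add,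
    show j + 1 + s = j + (s + 1) by ring, qStirlingConvCoeff_add, qStirlingConvCoeff_add]
  rcases le_or_gt r s with hrs | hsr
  · simp only [qBinom_of_lt _ (Nat.lt_succ_of_le hrs), Nat.sub_eq_zero_of_le hrs,
      qDescFactorial_zero_right]
    ring
  obtain ⟨t, rfl⟩ := Nat.exists_eq_add_of_lt hsr
  rw [show s + t + 1 - s = t + 1 by omega, show s + t + 1 - (s + 1) = t by omega,
    qDescFactorial_succ_succ, qDescFactorial_succ]
  have habs := pow_mul_qNat_mul_qBinom_inv hq s t
  have hdiff := pow_mul_qBracket_sub hq j t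
  simp only [← Nat.cast_succ, qBracket_natCast hq1] at hdiff ⊢
  have hj : qNat q j * (q - 1) = q ^ j - 1 := geom_sum_mul q j
  have ht : qNat q t * (q - 1) = q ^ t - 1 := geom_sum_mul q t
  have hj₁ : qNat q (j + 1) = qNat q j + q ^ j := sum_range_succ _ _
  have ht₁ : qNat q (t + 1) = qNat q t + q ^ t := sum_range_succ _ _
  have hjs : qNat q (j + s).succ = qNat q j + q ^ j * qNat q (s + 1) := qNat_add q j (s + 1)
  rw [hj₁, hjs]
  rw [ht₁] at habs
  set B₀ := qBinom (1 / q) (s + t + 1) s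
  set P := qDescFactorial q j t
  -- after clearing `q ^ t`, what is left is `(q ^ t - 1) [j]_q = (q ^ j - 1) [t]_q`
  refine mul_left_cancel₀ (pow_ne_zero t hq.ne') ?_
  linear_combination q ^ (j * s) * P *
    (q ^ (j + s) * B₀ * (qNat q t * hj - qNat q j * ht - hdiff) - q ^ (2 * j) * habs)

end qStirlingConvCoeff

/-- A convolution identity for `q`-Stirling numbers of the second kind:
`S_q[n+m,k] = Σ_r Σ_j S_q[m,j] q^{j(k-j)} binom(r,k-j)_{1/q} S_q[n,r] [j]_q [j-1]_q ⋯ [k-r+1]_q`. -/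
theorem qStirling_convolution (q : ℝ) (hq : 0 < q) (hq1 : q ≠ 1) (n m k : ℕ) :
    qStirling q (n + m) k
    = ∑ r ∈ Finset.range (n + 1), ∑ j ∈ Finset.range (m + 1),
        qStirling q m j * q ^ ((j : ℝ) * ((k : ℝ) - (j : ℝ))) *
          (if j ≤ k then qBinom (1 / q) r (k - j) else 0) *
          qStirling q n r *
          ∏ i ∈ Finset.range (r + j - k), qBracket q ((j : ℝ) - (i : ℝ)) := by
  set v : ℕ → ℕ → ℝ := fun j k =>
    ∑ r ∈ range (n + 1), qStirlingConvCoeff q r j k * qStirling q n r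
  have hv₀ (k : ℕ) : v 0 k = qStirling q n k := by
    simp only [v, qStirlingConvCoeff_zero_left, ite_mul, one_mul, zero_mul, sum_ite_eq', mem_range]
    split_ifs with hk
    · rfl
    · exact (qStirling_eq_zero_of_lt q (by omega)).symm
  have hv_zero (j : ℕ) : v (j + 1) 0 = 0 :=
    sum_eq_zero fun r _ => by rw [qStirlingConvCoeff_of_lt q j.succ_pos, zero_mul]
  have hv (j k : ℕ) : q ^ j * v (j + 1) (k + 1) + qBracket q j * v j (k + 1)
      = q ^ k * v j k + qBracket q (k + 1) * v j (k + 1) := by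
    simp only [v, mul_sum, ← sum_add_distrib]
    exact sum_congr rfl fun r _ => by
      linear_combination qStirling q n r * qStirlingConvCoeff_rec hq hq1 r j k
  rw [qStirling_add_eq_sum q n v hv₀ hv_zero hv, sum_comm]
  simp only [v, mul_sum]
  refine sum_congr rfl fun j _ => sum_congr rfl fun r _ => ?_
  simp only [qStirlingConvCoeff, qDescFactorial]
  ring
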